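/- arXiv:2510.12893 — 4 statements merged into one kernel-verified Lean document; each statement's English description precedes it below -/
import Mathlib

section
/- Let S_K ⊆ O_K^× be a finite set closed under inversion and let c_S > 0 be a constant with c_S < h_∞(β) for every β ∈ O_K^× ∖ S_K. Then for every η ∈ ℝ^{r₁+r₂} with Σ_j η_j ≥ 0 and every X ≥ 0, the number of units β ∈ O_K^× with h̃(η + L(β)) ≤ X is at most #S_K · ((X + c_S/2)/(c_S/2))^{r₁+r₂−1}. -/
open NumberField MeasureTheory
open scoped ENNReal Classical nonZeroDivisors

noncomputable section

variable (K : Type*) [Field K] [NumberField K]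

/-- `h_∞(α) = (1/d) Σ_σ max(0, log|σ(α)|)`, sum over all complex embeddings of `K`. -/
def hInf (α : K) : ℝ :=
  (Module.finrank ℚ K : ℝ)⁻¹ * ∑ σ : K →+* ℂ, max 0 (Real.log ‖σ α‖)

/-- The ring of integers of `K` as an additive subgroup of `K`. -/
def intSub : AddSubgroup K := (algebraMap (𝓞 K) K).range.toAddSubgroup

/-- `D(α) = [O_K : O_K ∩ α⁻¹ O_K]`. -/
def Dden (α : K) : ℕ :=
  (AddSubgroup.map (AddMonoidHom.mulLeft α⁻¹) (intSub K)).relIndex (intSub K)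

/-- `N(α) = |N_{K/ℚ}(α)|`. -/
def Nabs (α : K) : ℝ := |((Algebra.norm ℚ α : ℚ) : ℝ)|

/-- The absolute logarithmic Weil height `h(α) = h_∞(α) + (1/d) log D(α)`. -/
def heightW (α : K) : ℝ :=
  hInf K α + (Module.finrank ℚ K : ℝ)⁻¹ * Real.log (Dden K α)

/-- `α` is a root of unity. -/
def IsRootOfUnity (α : K) : Prop := ∃ n : ℕ, 0 < n ∧ α ^ n = 1

/-- `ω_K`, the number of roots of unity in `K`. -/
def omegaK : ℕ := Nat.card {ζ : K // IsRootOfUnity K ζ}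

/-- The squared Euclidean norm on `K_ℝ = ℝ^{r₁} × ℂ^{r₂}`:
`‖x‖² = Σ_{w real} x_w² + 2 Σ_{w complex} |x_w|²`. -/
def eNormSq (x : mixedEmbedding.mixedSpace K) : ℝ :=
  (∑ w, (x.1 w) ^ 2) + 2 * ∑ w, Complex.normSq (x.2 w)

/-- The origin-centered Euclidean ball of radius `R` in `K_ℝ^t`. -/
def eBall (t : ℕ) (R : ℝ) : Set (Fin t → mixedEmbedding.mixedSpace K) :=
  {x | ∑ i, eNormSq K (x i) ≤ R ^ 2}

/-- Coordinatewise multiplication by (the canonical embedding of) `α` of a subset of `K_ℝ^t`. -/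
def smulSet (α : K) (t : ℕ) (S : Set (Fin t → mixedEmbedding.mixedSpace K)) :
    Set (Fin t → mixedEmbedding.mixedSpace K) :=
  (fun x i => mixedEmbedding K α * x i) '' S

/-- The Dedekind zeta function `ζ_K(s) = Σ_I N(I)^{-s}`, summed over nonzero integral ideals. -/
def zetaK (s : ℝ) : ℝ :=
  ∑' I : {I : Ideal (𝓞 K) // I ≠ ⊥}, (Ideal.absNorm I.1 : ℝ) ^ (-s)

end

/-- The logarithmic embedding `L : K^× → ℝ^{r₁+r₂}` (indexed by the infinite places),
with coordinate `log|σ(α)|` at a real place and `2 log|σ(α)|` at a complex place. -/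
noncomputable def logEmb {K : Type*} [Field K] [NumberField K] (α : K) :
    InfinitePlace K → ℝ :=
  fun w => (w.mult : ℝ) * Real.log (w α)

/-- `h̃(x) = (1/d) Σ_j max(0, x_j)` on `ℝ^{r₁+r₂}`. -/
noncomputable def hTil (K : Type*) [Field K] [NumberField K] (x : InfinitePlace K → ℝ) : ℝ :=
  (Module.finrank ℚ K : ℝ)⁻¹ * ∑ w, max 0 (x w)

/-!
The vectors `η + L(β)` all have coordinate sum `∑ η ≥ 0`; moving that sum onto one place only
lowers `h̃`, so we may assume they lie on the hyperplane `∑ x = 0`, of dimension `r₁ + r₂ - 1`.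
There `2d · h̃` is the `ℓ¹` norm, and `L(β) - L(β') = L(β β'⁻¹)`. Units whose pairwise quotients
avoid `S` thus give points of the `ℓ¹` ball of radius `2dX` at mutual distance `> 2d c_S`, and
comparing the volumes of disjoint balls of radius `d c_S` bounds their number by
`((X + c_S/2)/(c_S/2))^{r₁+r₂-1}`. Since `S` contains `1` and is closed under inversion, a maximal
such family `T` among the units counted has every counted unit in `S · T`.
-/

open Metric
open scoped Pointwise

theorem card_le_of_pairwise_lt_dist {E ι : Type*} [NormedAddCommGroup E] [NormedSpace ℝ E]
    [FiniteDimensional ℝ E] [MeasurableSpace E] [BorelSpace E]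
    (F : Finset ι) (p : ι → E) (x : E) {r R : ℝ} (hr : 0 < r) (hR : 0 ≤ R)
    (hp : ∀ i ∈ F, p i ∈ closedBall x R)
    (hsep : (F : Set ι).Pairwise fun i j => 2 * r < dist (p i) (p j)) :
    (F.card : ℝ) ≤ ((R + r) / r) ^ Module.finrank ℝ E := by
  set μ : Measure E := Measure.addHaar
  set n := Module.finrank ℝ E
  have hdisj : (F : Set ι).PairwiseDisjoint fun i => closedBall (p i) r := by
    intro i hi j hj hij
    refine Set.disjoint_left.2 fun z hzi hzj => (hsep hi hj hij).not_ge ?_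
    calc dist (p i) (p j) ≤ dist z (p i) + dist z (p j) := dist_triangle_left _ _ _
      _ ≤ 2 * r := by rw [mem_closedBall] at hzi hzj; linarith
  have hsub : (⋃ i ∈ F, closedBall (p i) r) ⊆ closedBall x (R + r) :=
    Set.iUnion₂_subset fun i hi =>
      closedBall_subset_closedBall' (by linarith [mem_closedBall.1 (hp i hi)])
  have hvol : (F.card : ℝ≥0∞) * (ENNReal.ofReal (r ^ n) * μ (ball 0 1)) ≤
      ENNReal.ofReal ((R + r) ^ n) * μ (ball 0 1) := by
    calc (F.card : ℝ≥0∞) * (ENNReal.ofReal (r ^ n) * μ (ball 0 1))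
        = μ (⋃ i ∈ F, closedBall (p i) r) := by
          rw [measure_biUnion_finset hdisj fun i _ => measurableSet_closedBall,
            Finset.sum_congr rfl fun i _ => Measure.addHaar_closedBall μ (p i) hr.le,
            Finset.sum_const, nsmul_eq_mul]
      _ ≤ μ (closedBall x (R + r)) := measure_mono hsub
      _ = _ := Measure.addHaar_closedBall μ x (by positivity)
  rw [← mul_assoc, ENNReal.mul_le_mul_iff_left (measure_ball_pos μ 0 one_pos).ne'
    measure_ball_lt_top.ne, ← ENNReal.ofReal_natCast, ← ENNReal.ofReal_mul (by positivity),
    ENNReal.ofReal_le_ofReal_iff (by positivity)] at hvol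
  rwa [div_pow, le_div_iff₀ (by positivity)]

theorem exists_card_le_subset_mul {G : Type*} [Group G] [DecidableEq G] {S : Finset G}
    (hS1 : 1 ∈ S) (hSinv : ∀ u ∈ S, u⁻¹ ∈ S) {A : Set G} {M : ℕ}
    (hM : ∀ F : Finset G, ↑F ⊆ A → (F : Set G).Pairwise (fun β β' => β * β'⁻¹ ∉ S) →
      F.card ≤ M) :
    ∃ T : Finset G, T.card ≤ M ∧ A ⊆ ↑(S * T) := by
  set P : Finset G → Prop :=
    fun F => ↑F ⊆ A ∧ (F : Set G).Pairwise (fun β β' => β * β'⁻¹ ∉ S)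
  set cards : Set ℕ := {n | ∃ F, P F ∧ F.card = n}
  have hbdd : BddAbove cards := ⟨M, by rintro n ⟨F, hF, rfl⟩; exact hM F hF.1 hF.2⟩
  obtain ⟨T, ⟨hTA, hTsep⟩, hTcard⟩ : sSup cards ∈ cards :=
    Nat.sSup_mem ⟨0, ∅, ⟨by simp, by simp⟩, rfl⟩ hbdd
  refine ⟨T, hM T hTA hTsep, fun β hβ => ?_⟩
  by_contra hβST
  have hfar : ∀ t ∈ T, β * t⁻¹ ∉ S := fun t ht hβt =>
    hβST (Finset.mem_mul.2 ⟨_, hβt, t, ht, inv_mul_cancel_right β t⟩)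
  have hβT : β ∉ T := fun h => hfar β h (by rwa [mul_inv_cancel])
  have hins : P (insert β T) := by
    refine ⟨by simpa [Set.insert_subset_iff] using ⟨hβ, hTA⟩, ?_⟩
    rw [Finset.coe_insert]
    refine hTsep.insert fun t ht _ => ⟨hfar t ht, fun h => hfar t ht ?_⟩
    simpa using hSinv _ h
  have := le_csSup hbdd ⟨_, hins, Finset.card_insert_of_notMem hβT⟩
  omega

def sumZero (ι : Type*) [Fintype ι] : Submodule ℝ (PiLp 1 fun _ : ι => ℝ) where
  carrier := {x | ∑ i, x.ofLp i = 0}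
  add_mem' {x y} hx hy := by simp_all [Finset.sum_add_distrib]
  zero_mem' := by simp
  smul_mem' c x hx := by simp_all [← Finset.mul_sum]

section sumZero

variable {ι : Type*} [Fintype ι]

theorem toLp_mem_sumZero {x : ι → ℝ} : WithLp.toLp 1 x ∈ sumZero ι ↔ ∑ i, x i = 0 := Iff.rfl

theorem sum_abs_eq_two_mul_sum_max_zero_sub (x : ι → ℝ) :
    ∑ i, |x i| = 2 * ∑ i, max 0 (x i) - ∑ i, x i := by
  rw [Finset.mul_sum, ← Finset.sum_sub_distrib]
  refine Finset.sum_congr rfl fun i _ => ?_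
  rcases le_total (x i) 0 with h | h
  · rw [abs_of_nonpos h, max_eq_left h]; ring
  · rw [abs_of_nonneg h, max_eq_right h]; ring

theorem norm_toLp_one_of_sum_eq_zero {x : ι → ℝ} (hx : ∑ i, x i = 0) :
    ‖WithLp.toLp 1 x‖ = 2 * ∑ i, max 0 (x i) := by
  simp only [PiLp.norm_eq_of_L1, Real.norm_eq_abs, sum_abs_eq_two_mul_sum_max_zero_sub, hx,
    sub_zero]

theorem finrank_sumZero_lt [Nonempty ι] :
    Module.finrank ℝ (sumZero ι) < Fintype.card ι := by
  obtain ⟨i⟩ := ‹Nonempty ι›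
  have hne : sumZero ι ≠ ⊤ := fun h => by
    have := (h ▸ Submodule.mem_top : WithLp.toLp 1 (Pi.single i (1 : ℝ)) ∈ sumZero ι)
    exact absurd (toLp_mem_sumZero.1 this) (by simp)
  simpa [(WithLp.linearEquiv 1 ℝ (ι → ℝ)).finrank_eq] using Submodule.finrank_lt hne

end sumZero

section NumberField

variable {K : Type*} [Field K] [NumberField K]

theorem sum_embeddings_eq_sum_mult (g : ℝ → ℝ) (α : K) :
    ∑ φ : K →+* ℂ, g ‖φ α‖ = ∑ w : InfinitePlace K, (w.mult : ℝ) * g (w α) := by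
  rw [← Finset.univ.sum_fiberwise InfinitePlace.mk]
  refine Finset.sum_congr rfl fun w _ => ?_
  have hφ (φ) (hφ : φ ∈ ({φ | InfinitePlace.mk φ = w} : Finset _)) : g ‖φ α‖ = g (w α) := by
    rw [← (Finset.mem_filter.1 hφ).2, InfinitePlace.apply]
  rw [Finset.sum_congr rfl hφ, Finset.sum_const, InfinitePlace.card_filter_mk_eq, nsmul_eq_mul]

theorem mul_hTil (x : InfinitePlace K → ℝ) :
    (Module.finrank ℚ K : ℝ) * hTil K x = ∑ w, max 0 (x w) := by
  rw [hTil, ← mul_assoc, mul_inv_cancel₀ (Nat.cast_pos.2 Module.finrank_pos).ne', one_mul]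

theorem hTil_mono {x y : InfinitePlace K → ℝ} (h : x ≤ y) : hTil K x ≤ hTil K y :=
  mul_le_mul_of_nonneg_left (Finset.sum_le_sum fun w _ => max_le_max le_rfl (h w))
    (by positivity)

theorem hTil_logEmb (α : K) : hTil K (logEmb α) = hInf K α := by
  simp only [hTil, hInf, logEmb, sum_embeddings_eq_sum_mult (max 0 <| Real.log ·),
    mul_max_of_nonneg _ _ (Nat.cast_nonneg _), mul_zero]

theorem logEmb_mul {α β : K} (hα : α ≠ 0) (hβ : β ≠ 0) :
    logEmb (α * β) = logEmb α + logEmb β := by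
  funext w
  simp only [logEmb, Pi.add_apply, map_mul,
    Real.log_mul (InfinitePlace.pos_iff.2 hα).ne' (InfinitePlace.pos_iff.2 hβ).ne', mul_add]

theorem sum_logEmb_unit (u : (𝓞 K)ˣ) : ∑ w, logEmb (algebraMap (𝓞 K) K u) w = 0 :=
  Units.sum_mult_mul_log u

theorem card_le_of_pairwise_lt_hInf {η : InfinitePlace K → ℝ} (hη : ∑ w, η w = 0) {c X : ℝ}
    (hc : 0 < c) (hX : 0 ≤ X) (F : Finset (𝓞 K)ˣ)
    (hF : ∀ β ∈ F, hTil K (η + logEmb (algebraMap (𝓞 K) K β)) ≤ X)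
    (hsep : (F : Set (𝓞 K)ˣ).Pairwise fun β β' => c < hInf K (algebraMap (𝓞 K) K ↑(β * β'⁻¹))) :
    (F.card : ℝ) ≤ ((X + c / 2) / (c / 2)) ^ (Fintype.card (InfinitePlace K) - 1) := by
  set d : ℝ := (Module.finrank ℚ K : ℝ)
  have hd : 0 < d := Nat.cast_pos.2 Module.finrank_pos
  set v : (𝓞 K)ˣ → InfinitePlace K → ℝ := fun β => η + logEmb (algebraMap (𝓞 K) K β)
  have hv (β : (𝓞 K)ˣ) : ∑ w, v β w = 0 := by
    simp only [v, Pi.add_apply, Finset.sum_add_distrib, hη, sum_logEmb_unit, add_zero]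
  have hv_sub (β β' : (𝓞 K)ˣ) : v β - v β' = logEmb (algebraMap (𝓞 K) K ↑(β * β'⁻¹)) := by
    have hβ : (algebraMap (𝓞 K) K β) =
        algebraMap (𝓞 K) K ↑(β * β'⁻¹) * algebraMap (𝓞 K) K β' := by
      rw [← map_mul, ← Units.val_mul, inv_mul_cancel_right]
    simp only [v, hβ, logEmb_mul (Units.coe_ne_zero _) (Units.coe_ne_zero _)]
    abel
  have hnorm {x : InfinitePlace K → ℝ} (hx : ∑ w, x w = 0) :
      ‖WithLp.toLp 1 x‖ = 2 * d * hTil K x := by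
    rw [norm_toLp_one_of_sum_eq_zero hx, mul_assoc, mul_hTil]
  let p : (𝓞 K)ˣ → sumZero (InfinitePlace K) := fun β => ⟨WithLp.toLp 1 (v β), hv β⟩
  have hp : ∀ β ∈ F, p β ∈ closedBall 0 (2 * d * X) := fun β hβ => by
    rw [mem_closedBall_zero_iff, Submodule.coe_norm, hnorm (hv β)]
    exact mul_le_mul_of_nonneg_left (hF β hβ) (by positivity)
  have hp_sep : (F : Set (𝓞 K)ˣ).Pairwise fun β β' => 2 * (d * c) < dist (p β) (p β') := by
    refine hsep.imp fun β β' hββ' => ?_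
    rw [dist_eq_norm, Submodule.coe_norm, Submodule.coe_sub, ← WithLp.toLp_sub, hv_sub,
      hnorm (sum_logEmb_unit _), hTil_logEmb, mul_assoc]
    exact mul_lt_mul_of_pos_left (mul_lt_mul_of_pos_left hββ' hd) two_pos
  have hratio : 1 ≤ (X + c / 2) / (c / 2) := (one_le_div (by positivity)).2 (by linarith)
  calc (F.card : ℝ)
      ≤ ((2 * d * X + d * c) / (d * c)) ^ Module.finrank ℝ (sumZero (InfinitePlace K)) :=
        card_le_of_pairwise_lt_dist F p 0 (by positivity) (by positivity) hp hp_sep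
    _ = ((X + c / 2) / (c / 2)) ^ Module.finrank ℝ (sumZero (InfinitePlace K)) := by
        congr 1; field_simp
    _ ≤ ((X + c / 2) / (c / 2)) ^ (Fintype.card (InfinitePlace K) - 1) :=
        pow_le_pow_right₀ hratio (Nat.le_sub_one_of_lt finrank_sumZero_lt)

end NumberField

theorem statement2 (K : Type*) [Field K] [NumberField K]
    (S : Finset ((𝓞 K)ˣ)) (hSinv : ∀ u ∈ S, u⁻¹ ∈ S)
    (cS : ℝ) (hcS0 : 0 < cS)
    (hcS : ∀ β : (𝓞 K)ˣ, β ∉ S → cS < hInf K (algebraMap (𝓞 K) K β))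
    (η : InfinitePlace K → ℝ) (hη : 0 ≤ ∑ w, η w) (X : ℝ) (hX : 0 ≤ X) :
    {β : (𝓞 K)ˣ | hTil K (η + logEmb (algebraMap (𝓞 K) K β)) ≤ X}.Finite ∧
    (Nat.card {β : (𝓞 K)ˣ | hTil K (η + logEmb (algebraMap (𝓞 K) K β)) ≤ X} : ℝ) ≤
      (S.card : ℝ) * ((X + cS / 2) / (cS / 2)) ^ (Fintype.card (InfinitePlace K) - 1) := by
  set A := {β : (𝓞 K)ˣ | hTil K (η + logEmb (algebraMap (𝓞 K) K β)) ≤ X}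
  set M := ((X + cS / 2) / (cS / 2)) ^ (Fintype.card (InfinitePlace K) - 1)
  have h1S : 1 ∈ S := by
    by_contra h
    have := hcS 1 h
    simp [hInf] at this
    linarith
  obtain ⟨w₀⟩ : Nonempty (InfinitePlace K) := inferInstance
  set η₀ := η - Pi.single w₀ (∑ w, η w)
  have hη₀ : ∑ w, η₀ w = 0 := by simp [η₀, Finset.sum_sub_distrib]
  have hη₀_le : η₀ ≤ η := sub_le_self _ (Pi.single_nonneg.2 hη)
  have hM : ∀ F : Finset (𝓞 K)ˣ, ↑F ⊆ A →
      (F : Set (𝓞 K)ˣ).Pairwise (fun β β' => β * β'⁻¹ ∉ S) → F.card ≤ ⌊M⌋₊ :=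
    fun F hFA hF => Nat.le_floor <| card_le_of_pairwise_lt_hInf hη₀ hcS0 hX F
      (fun β hβ => (hTil_mono (add_le_add hη₀_le le_rfl)).trans (hFA hβ))
      (hF.imp fun β β' => hcS _)
  obtain ⟨T, hT, hAT⟩ := exists_card_le_subset_mul h1S hSinv hM
  refine ⟨(S * T).finite_toSet.subset hAT, ?_⟩
  calc (Nat.card A : ℝ) ≤ (S * T).card := by
        rw [Nat.card_coe_set_eq, ← Set.ncard_coe_finset]
        exact_mod_cast Set.ncard_le_ncard hAT (S * T).finite_toSet
    _ ≤ S.card * T.card := by exact_mod_cast Finset.card_mul_le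
    _ ≤ S.card * M := by
        gcongr
        exact (Nat.cast_le.2 hT).trans (Nat.floor_le (by positivity))
end

section
/- Let S_K ⊆ O_K^× be a finite set closed under inversion and let c_S > 0 be a constant with c_S < h_∞(β) for every β ∈ O_K^× ∖ S_K. Let H = {x ∈ ℝ^{r₁+r₂} : Σ_j x_j = 0} and P = {ξ ∈ H : h̃(ξ) ≤ c_S/2}. Then for every η ∈ ℝ^{r₁+r₂} and all β₁, β₂ ∈ O_K^×: if the translates L(β₁) + η + P and L(β₂) + η + P have a common point, then β₁β₂⁻¹ ∈ S_K. -/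
open NumberField MeasureTheory
open scoped ENNReal Classical nonZeroDivisors

/-! If the translates meet, then `L(β₁β₂⁻¹) = ξ₂ - ξ₁` with `ξ₁, ξ₂ ∈ P`. Since `h̃` is subadditive
and, on the trace-zero hyperplane `H`, invariant under `x ↦ -x`, this gives
`h_∞(β₁β₂⁻¹) = h̃(ξ₂ - ξ₁) ≤ c_S`, so `β₁β₂⁻¹` cannot lie outside `S`. -/

/- Each infinite place `w` is induced by exactly `w.mult` complex embeddings. -/
theorem hInf_eq_hTil_logEmb (K : Type*) [Field K] [NumberField K] (α : K) :
    hInf K α = hTil K (logEmb α) := by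
  unfold hInf hTil logEmb
  congr 1
  rw [← Finset.sum_fiberwise Finset.univ InfinitePlace.mk fun φ => max 0 (Real.log ‖φ α‖)]
  refine Finset.sum_congr rfl fun w _ => ?_
  have hfiber : ∀ φ ∈ Finset.univ.filter (InfinitePlace.mk · = w),
      max 0 (Real.log ‖φ α‖) = max 0 (Real.log (w α)) := fun φ hφ => by
    rw [← (Finset.mem_filter.mp hφ).2, InfinitePlace.apply]
  rw [Finset.sum_congr rfl hfiber, Finset.sum_const, InfinitePlace.card_filter_mk_eq,
    nsmul_eq_mul, mul_max_of_nonneg _ _ (Nat.cast_nonneg _), mul_zero]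

theorem logEmb_div {K : Type*} [Field K] [NumberField K] {α β : K} (hα : α ≠ 0) (hβ : β ≠ 0) :
    logEmb (α / β) = logEmb α - logEmb β := by
  funext w
  simp only [logEmb, Pi.sub_apply, map_div₀]
  rw [Real.log_div (by simpa using hα) (by simpa using hβ), mul_sub]

theorem hTil_add_le (K : Type*) [Field K] [NumberField K] (x y : InfinitePlace K → ℝ) :
    hTil K (x + y) ≤ hTil K x + hTil K y := by
  unfold hTil
  rw [← mul_add, ← Finset.sum_add_distrib]
  refine mul_le_mul_of_nonneg_left (Finset.sum_le_sum fun w _ => ?_) (by positivity)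
  exact max_le (by positivity) (add_le_add (le_max_right 0 (x w)) (le_max_right 0 (y w)))

/- On the trace-zero hyperplane the positive and negative parts of `x` have the same total mass. -/
theorem hTil_neg (K : Type*) [Field K] [NumberField K] {x : InfinitePlace K → ℝ}
    (hx : ∑ w, x w = 0) : hTil K (-x) = hTil K x := by
  unfold hTil
  have hmax : ∀ a : ℝ, max 0 (-a) = max 0 a - a := fun a => by
    rcases le_total a 0 with h | h
    · rw [max_eq_right (neg_nonneg.mpr h), max_eq_left h]; ring
    · rw [max_eq_left (neg_nonpos.mpr h), max_eq_right h]; ring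
  simp only [Pi.neg_apply, hmax, Finset.sum_sub_distrib, hx, sub_zero]

theorem hTil_sub_le (K : Type*) [Field K] [NumberField K] (x : InfinitePlace K → ℝ)
    {y : InfinitePlace K → ℝ} (hy : ∑ w, y w = 0) :
    hTil K (x - y) ≤ hTil K x + hTil K y := by
  simpa only [sub_eq_add_neg, hTil_neg K hy] using hTil_add_le K x (-y)

theorem statement3_general (K : Type*) [Field K] [NumberField K]
    (S : Finset ((𝓞 K)ˣ))
    (cS : ℝ)
    (hcS : ∀ β : (𝓞 K)ˣ, β ∉ S → cS < hInf K (algebraMap (𝓞 K) K β))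
    (H : Set (InfinitePlace K → ℝ)) (hH : H = {x | ∑ w, x w = 0})
    (P : Set (InfinitePlace K → ℝ)) (hP : P = {ξ ∈ H | hTil K ξ ≤ cS / 2})
    (η : InfinitePlace K → ℝ) (β₁ β₂ : (𝓞 K)ˣ)
    (hmeet : (((fun ξ => logEmb (algebraMap (𝓞 K) K β₁) + η + ξ) '' P) ∩
      ((fun ξ => logEmb (algebraMap (𝓞 K) K β₂) + η + ξ) '' P)).Nonempty) :
    β₁ * β₂⁻¹ ∈ S := by
  subst hH hP
  obtain ⟨_, ⟨ξ₁, ⟨hξ₁, hξ₁P⟩, rfl⟩, ⟨ξ₂, ⟨-, hξ₂P⟩, hmeet⟩⟩ := hmeet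
  have hne : ∀ β : (𝓞 K)ˣ, algebraMap (𝓞 K) K β ≠ 0 := fun β =>
    (β.isUnit.map (algebraMap (𝓞 K) K)).ne_zero
  have hlog : logEmb (algebraMap (𝓞 K) K ↑(β₁ * β₂⁻¹)) = ξ₂ - ξ₁ := by
    rw [Units.val_mul, map_mul, map_units_inv, ← div_eq_mul_inv, logEmb_div (hne β₁) (hne β₂)]
    funext w
    have hw := congrFun hmeet w
    simp only [Pi.add_apply, Pi.sub_apply] at hw ⊢
    linarith
  by_contra hγ
  have hbig := hcS _ hγ
  rw [hInf_eq_hTil_logEmb, hlog] at hbig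
  linarith [hTil_sub_le K ξ₂ hξ₁]

theorem statement3 (K : Type*) [Field K] [NumberField K]
    (S : Finset ((𝓞 K)ˣ)) (hSinv : ∀ u ∈ S, u⁻¹ ∈ S)
    (cS : ℝ) (hcS0 : 0 < cS)
    (hcS : ∀ β : (𝓞 K)ˣ, β ∉ S → cS < hInf K (algebraMap (𝓞 K) K β))
    (H : Set (InfinitePlace K → ℝ)) (hH : H = {x | ∑ w, x w = 0})
    (P : Set (InfinitePlace K → ℝ)) (hP : P = {ξ ∈ H | hTil K ξ ≤ cS / 2})
    (η : InfinitePlace K → ℝ) (β₁ β₂ : (𝓞 K)ˣ)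
    (hmeet : (((fun ξ => logEmb (algebraMap (𝓞 K) K β₁) + η + ξ) '' P) ∩
      ((fun ξ => logEmb (algebraMap (𝓞 K) K β₂) + η + ξ) '' P)).Nonempty) :
    β₁ * β₂⁻¹ ∈ S :=
  statement3_general K S cS hcS H hH P hP η β₁ β₂ hmeet
end

section
/- Let (Ω, 𝒜, P) be a probability space, let ω be a positive integer, let Err ≥ 0 and 0 < ε < 1 be real numbers. Let ρ₁, ρ₂ : Ω → ℕ be random variables such that ω divides ρᵢ(x) for every x ∈ Ω and i = 1, 2, with ρ₁ integrable, ρ₂ square-integrable, E[ρ₁] = ω·ε, E[ρ₂] = ω/ε, and E[ρ₂²] ≤ (ω/ε)² + ω·(ω/ε)·(1 + Err). Then P({ρ₁ = 0} ∩ {ρ₂ ≥ 1}) ≥ 1 − ε·(2 + ω·Err). -/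
/-!
Since `ω ∣ ρ₁`, the event `ρ₁ ≠ 0` forces `ρ₁ ≥ ω`, so Markov's inequality gives
`P(ρ₁ ≠ 0) ≤ E[ρ₁] / ω = ε`. The event `ρ₂ = 0` is a deviation of `ρ₂` from its mean `m = ω / ε`
by `m`, so Chebyshev's inequality gives `P(ρ₂ = 0) ≤ Var[ρ₂] / m² ≤ ε (1 + Err)`.
A union bound over the two bad events finishes the proof.
-/

open MeasureTheory ProbabilityTheory

section

variable {Ω : Type*} {mΩ : MeasurableSpace Ω} {μ : Measure Ω}

lemma measureReal_inter_ge_one_sub [IsProbabilityMeasure μ] (s t : Set Ω) :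
    1 - μ.real sᶜ - μ.real tᶜ ≤ μ.real (s ∩ t) := by
  have hcover : Set.univ ⊆ (s ∩ t) ∪ sᶜ ∪ tᶜ := fun x _ => by
    by_cases hs : x ∈ s <;> by_cases ht : x ∈ t <;> simp [hs, ht]
  have := calc
    1 = μ.real Set.univ := probReal_univ.symm
    _ ≤ μ.real ((s ∩ t) ∪ sᶜ ∪ tᶜ) := measureReal_mono hcover
    _ ≤ μ.real ((s ∩ t) ∪ sᶜ) + μ.real tᶜ := measureReal_union_le _ _
    _ ≤ μ.real (s ∩ t) + μ.real sᶜ + μ.real tᶜ := by gcongr; exact measureReal_union_le _ _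
  linarith

lemma measureReal_ne_zero_le_integral_div_of_dvd [IsFiniteMeasure μ] {ρ : Ω → ℕ} {d : ℕ}
    (hd : 0 < d) (hdvd : ∀ x, d ∣ ρ x) (hρ : Integrable (fun x => (ρ x : ℝ)) μ) :
    μ.real {x | ρ x ≠ 0} ≤ (∫ x, (ρ x : ℝ) ∂μ) / d := by
  have hsub : {x | ρ x ≠ 0} ⊆ {x | (d : ℝ) ≤ ρ x} := fun x hx =>
    show (d : ℝ) ≤ ρ x from Nat.cast_le.mpr (Nat.le_of_dvd (Nat.pos_of_ne_zero hx) (hdvd x))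
  have markov := mul_meas_ge_le_integral_of_nonneg
    (ae_of_all _ fun x => Nat.cast_nonneg (ρ x)) hρ (d : ℝ)
  rw [le_div_iff₀' (by exact_mod_cast hd)]
  exact (mul_le_mul_of_nonneg_left (measureReal_mono hsub) (Nat.cast_nonneg d)).trans markov

lemma measureReal_eq_zero_le_variance_div_sq [IsFiniteMeasure μ] {X : Ω → ℝ} (hX : MemLp X 2 μ)
    (hmean : 0 < μ[X]) : μ.real {x | X x = 0} ≤ variance X μ / μ[X] ^ 2 := by
  have hsub : {x | X x = 0} ⊆ {x | μ[X] ≤ |X x - μ[X]|} := fun x hx => by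
    simp [show X x = 0 from hx, abs_of_pos hmean]
  exact (measureReal_mono hsub).trans <| ENNReal.toReal_le_of_le_ofReal
    (div_nonneg (variance_nonneg X μ) (sq_nonneg _)) (meas_ge_le_variance_div_sq hX hmean)

end

open scoped ENNReal

theorem statement12_general (Ω : Type*) [MeasureSpace Ω]
    [IsProbabilityMeasure (volume : Measure Ω)]
    (ω : ℕ) (hω : 0 < ω) (Err ε : ℝ) (hErr : 0 ≤ Err) (hε0 : 0 < ε)
    (ρ₁ ρ₂ : Ω → ℕ)
    (hdvd₁ : ∀ x, ω ∣ ρ₁ x)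
    (hint₁ : Integrable (fun x => (ρ₁ x : ℝ)))
    (hint₂ : MemLp (fun x => (ρ₂ x : ℝ)) 2)
    (hE₁ : ∫ x, (ρ₁ x : ℝ) = ω * ε)
    (hE₂ : ∫ x, (ρ₂ x : ℝ) = ω / ε)
    (hE₂sq : ∫ x, ((ρ₂ x : ℝ)) ^ 2 ≤ ((ω : ℝ) / ε) ^ 2 + ω * ((ω : ℝ) / ε) * (1 + Err)) :
    ENNReal.ofReal (1 - ε * (2 + ω * Err)) ≤ volume {x | ρ₁ x = 0 ∧ 1 ≤ ρ₂ x} := by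
  have hωpos : (0 : ℝ) < ω := by exact_mod_cast hω
  have hρ₁ : volume.real {x | ρ₁ x ≠ 0} ≤ ε := by
    have h := measureReal_ne_zero_le_integral_div_of_dvd hω hdvd₁ hint₁
    rwa [hE₁, mul_div_cancel_left₀ _ hωpos.ne'] at h
  have hρ₂ : volume.real {x | ρ₂ x = 0} ≤ ε * (1 + ω * Err) := by
    have h := measureReal_eq_zero_le_variance_div_sq hint₂ (hE₂ ▸ by positivity)
    simp only [variance_eq_sub hint₂, hE₂, Pi.pow_apply, Nat.cast_eq_zero] at h
    calc _ ≤ _ := h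
      _ ≤ ω * (ω / ε) * (1 + Err) / (ω / ε) ^ 2 := by gcongr; linarith
      _ = ε * (1 + Err) := by field_simp
      _ ≤ ε * (1 + ω * Err) := by
        gcongr; exact le_mul_of_one_le_left hErr (by exact_mod_cast hω)
  have hunion : 1 - volume.real {x | ρ₁ x ≠ 0} - volume.real {x | ρ₂ x = 0}
      ≤ volume.real {x | ρ₁ x = 0 ∧ 1 ≤ ρ₂ x} := by
    have h := measureReal_inter_ge_one_sub (μ := volume) {x | ρ₁ x = 0} {x | 1 ≤ ρ₂ x}
    simp only [Set.compl_ofPred, not_le, Nat.lt_one_iff] at h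
    exact h
  rw [← ofReal_measureReal]
  exact ENNReal.ofReal_le_ofReal (by linarith)

theorem statement12 (Ω : Type*) [MeasureSpace Ω]
    [IsProbabilityMeasure (volume : Measure Ω)]
    (ω : ℕ) (hω : 0 < ω) (Err ε : ℝ) (hErr : 0 ≤ Err) (hε0 : 0 < ε) (hε1 : ε < 1)
    (ρ₁ ρ₂ : Ω → ℕ) (hmeas₁ : Measurable ρ₁) (hmeas₂ : Measurable ρ₂)
    (hdvd₁ : ∀ x, ω ∣ ρ₁ x) (hdvd₂ : ∀ x, ω ∣ ρ₂ x)
    (hint₁ : Integrable (fun x => (ρ₁ x : ℝ)))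
    (hint₂ : MemLp (fun x => (ρ₂ x : ℝ)) 2)
    (hE₁ : ∫ x, (ρ₁ x : ℝ) = ω * ε)
    (hE₂ : ∫ x, (ρ₂ x : ℝ) = ω / ε)
    (hE₂sq : ∫ x, ((ρ₂ x : ℝ)) ^ 2 ≤ ((ω : ℝ) / ε) ^ 2 + ω * ((ω : ℝ) / ε) * (1 + Err)) :
    ENNReal.ofReal (1 - ε * (2 + ω * Err)) ≤ volume {x | ρ₁ x = 0 ∧ 1 ≤ ρ₂ x} :=
  statement12_general Ω ω hω Err ε hErr hε0 ρ₁ ρ₂ hdvd₁ hint₁ hint₂ hE₁ hE₂ hE₂sq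
end

section
/- Let S_K ⊆ O_K^× be a finite set closed under inversion and let c_S > 0 be a constant with c_S < h_∞(β) for every β ∈ O_K^× ∖ S_K. Then for every α ∈ K^× with N(α) ≥ 1, the number of units β ∈ O_K^× with h_∞(αβ) ≤ c_S/2 is at most #S_K. -/
open NumberField MeasureTheory
open scoped ENNReal Classical nonZeroDivisors

/-!
Since `h_∞` is subadditive and `h_∞(y⁻¹) = h_∞(y) - (1/d) log N(y) ≤ h_∞(y)` when `N(y) ≥ 1`,
any two units `β, β₀` with `h_∞(αβ), h_∞(αβ₀) ≤ c_S/2` give the unit `β/β₀ = (αβ)(αβ₀)⁻¹` of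
height at most `c_S`, which therefore lies in `S_K`. So all such `β` lie in the translate `S_K β₀`.
-/

theorem Set.finite_and_natCard_le_of_mul_inv_mem {G : Type*} [Group G] (S : Finset G)
    (T : Set G) (hT : ∀ a ∈ T, ∀ b ∈ T, a * b⁻¹ ∈ S) : T.Finite ∧ Nat.card T ≤ S.card := by
  rcases T.eq_empty_or_nonempty with rfl | ⟨b, hb⟩
  · simp
  have hsub : T ⊆ ↑(S.map (mulRightEmbedding b)) := fun a ha =>
    Finset.mem_map.mpr ⟨a * b⁻¹, hT a ha b hb, by simp⟩
  refine ⟨(Finset.finite_toSet _).subset hsub, ?_⟩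
  calc Nat.card T = T.ncard := Nat.card_coe_set_eq T
    _ ≤ (S.map (mulRightEmbedding b) : Set G).ncard := Set.ncard_le_ncard hsub
    _ = S.card := by rw [Set.ncard_coe_finset, Finset.card_map]

section hInf

variable {K : Type*} [Field K] [NumberField K]

theorem prod_norm_embedding_eq_Nabs (x : K) : ∏ σ : K →+* ℂ, ‖σ x‖ = Nabs K x := by
  have h := congr_arg norm (Algebra.norm_eq_prod_embeddings ℚ ℂ x)
  rw [norm_prod] at h
  rw [Fintype.prod_equiv (RingHom.equivRatAlgHom K ℂ) (fun σ => ‖σ x‖) (fun f => ‖f x‖)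
    (fun _ => by simp [RingHom.equivRatAlgHom_apply]), ← h, eq_ratCast, Nabs,
    Complex.norm_ratCast]

theorem sum_log_norm_embedding_eq_log_Nabs {x : K} (hx : x ≠ 0) :
    ∑ σ : K →+* ℂ, Real.log ‖σ x‖ = Real.log (Nabs K x) := by
  rw [← prod_norm_embedding_eq_Nabs, Real.log_prod]
  intro σ _
  simpa using hx

theorem Nabs_mul (x y : K) : Nabs K (x * y) = Nabs K x * Nabs K y := by
  simp only [Nabs, map_mul, Rat.cast_mul, abs_mul]

theorem Nabs_algebraMap_unit (u : (𝓞 K)ˣ) : Nabs K (algebraMap (𝓞 K) K u) = 1 := by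
  change |((Algebra.norm ℚ (u : K) : ℚ) : ℝ)| = 1
  rw [← Rat.cast_abs, Units.norm, Rat.cast_one]

theorem hInf_mul_le {x y : K} (hx : x ≠ 0) (hy : y ≠ 0) :
    hInf K (x * y) ≤ hInf K x + hInf K y := by
  rw [hInf, hInf, hInf, ← mul_add, ← Finset.sum_add_distrib]
  gcongr with σ
  rw [map_mul, norm_mul, Real.log_mul (by simpa using hx) (by simpa using hy)]
  exact max_le (by positivity) (add_le_add (le_max_right _ _) (le_max_right _ _))

theorem hInf_inv {x : K} (hx : x ≠ 0) :
    hInf K x⁻¹ = hInf K x - (Module.finrank ℚ K : ℝ)⁻¹ * Real.log (Nabs K x) := by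
  have hσ (σ : K →+* ℂ) :
      max 0 (Real.log ‖σ x⁻¹‖) = max 0 (Real.log ‖σ x‖) - Real.log ‖σ x‖ := by
    rw [map_inv₀, norm_inv, Real.log_inv, max_comm 0, max_comm 0]
    linarith [max_zero_sub_max_neg_zero_eq_self (Real.log ‖σ x‖)]
  rw [hInf, hInf, ← mul_sub, Finset.sum_congr rfl fun σ _ => hσ σ, Finset.sum_sub_distrib,
    sum_log_norm_embedding_eq_log_Nabs hx]

theorem hInf_inv_le_of_one_le_Nabs {x : K} (hx : x ≠ 0) (hN : 1 ≤ Nabs K x) :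
    hInf K x⁻¹ ≤ hInf K x := by
  rw [hInf_inv hx, sub_le_self_iff]
  exact mul_nonneg (by positivity) (Real.log_nonneg hN)

theorem hInf_mul_inv_le {x y : K} (hx : x ≠ 0) (hy : y ≠ 0) (hN : 1 ≤ Nabs K y) :
    hInf K (x * y⁻¹) ≤ hInf K x + hInf K y :=
  (hInf_mul_le hx (inv_ne_zero hy)).trans (by gcongr; exact hInf_inv_le_of_one_le_Nabs hy hN)

end hInf

theorem statement18_general (K : Type*) [Field K] [NumberField K]
    (S : Finset ((𝓞 K)ˣ))
    (cS : ℝ)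
    (hcS : ∀ β : (𝓞 K)ˣ, β ∉ S → cS < hInf K (algebraMap (𝓞 K) K β))
    (α : K) (hα : α ≠ 0) (hN : 1 ≤ Nabs K α) :
    {β : (𝓞 K)ˣ | hInf K (α * algebraMap (𝓞 K) K β) ≤ cS / 2}.Finite ∧
    Nat.card {β : (𝓞 K)ˣ | hInf K (α * algebraMap (𝓞 K) K β) ≤ cS / 2} ≤ S.card := by
  refine Set.finite_and_natCard_le_of_mul_inv_mem S _ fun β hβ β₀ hβ₀ => ?_
  by_contra hS
  have hunit (u : (𝓞 K)ˣ) : algebraMap (𝓞 K) K u ≠ 0 := by simp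
  have hval : algebraMap (𝓞 K) K ↑(β * β₀⁻¹)
      = (α * algebraMap (𝓞 K) K β) * (α * algebraMap (𝓞 K) K β₀)⁻¹ := by
    rw [Units.val_mul, map_mul, map_units_inv, mul_inv]
    field_simp
  have hNβ₀ : 1 ≤ Nabs K (α * algebraMap (𝓞 K) K β₀) := by
    rwa [Nabs_mul, Nabs_algebraMap_unit, mul_one]
  have hle := hInf_mul_inv_le (mul_ne_zero hα (hunit β)) (mul_ne_zero hα (hunit β₀)) hNβ₀
  have hgt := hcS _ hS
  rw [hval] at hgt
  linarith [hβ.out, hβ₀.out]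

theorem statement18 (K : Type*) [Field K] [NumberField K]
    (S : Finset ((𝓞 K)ˣ)) (hSinv : ∀ u ∈ S, u⁻¹ ∈ S)
    (cS : ℝ) (hcS0 : 0 < cS)
    (hcS : ∀ β : (𝓞 K)ˣ, β ∉ S → cS < hInf K (algebraMap (𝓞 K) K β))
    (α : K) (hα : α ≠ 0) (hN : 1 ≤ Nabs K α) :
    {β : (𝓞 K)ˣ | hInf K (α * algebraMap (𝓞 K) K β) ≤ cS / 2}.Finite ∧
    Nat.card {β : (𝓞 K)ˣ | hInf K (α * algebraMap (𝓞 K) K β) ≤ cS / 2} ≤ S.card :=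
  statement18_general K S cS hcS α hα hN
end
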